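/- arXiv:2204.13089 — 3 statements merged into one kernel-verified Lean document; each statement's English description precedes it below -/
import Mathlib

section
/- Let n ≥ 2, let d ∈ ℝⁿ have all entries positive and set D = diag(d), let R > 0, and let the random vector x ∈ ℝⁿ be distributed according to the multivariate Gaussian distribution N(x̄, Σ_x) with Σ_x symmetric positive definite. Then almost surely (over x) the following holds: every diagonal matrix D' satisfying D − (D x xᵀ D)/(xᵀ D x + R) ⪯ D' ⪯ D must equal D. (Theorem 1: for parameter estimation with a nondegenerate Gaussian input vector, the conservative sandwiching constraint P_KF ⪯ P_t ⪯ P_{t−1} on diagonal covariances almost surely forces P_t = P_{t−1}.) -/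
/-!
A rank-one update `c • u uᵀ` is invisible along every vector orthogonal to `u`. With `u = D x`,
testing the lower bound `D - c • u uᵀ ⪯ D'` against `v = u j • eᵢ - u i • eⱼ` gives
`u j ^ 2 (d' i - d i) + u i ^ 2 (d' j - d j) ≥ 0`; since `d' ≤ d` by the upper bound, this forces
`d' i ≥ d i` as soon as `u j ≠ 0`. A Gaussian with a density is absolutely continuous with respect
to Lebesgue measure, so almost surely no coordinate of `x`, hence of `D x`, vanishes.
-/

open Matrix MeasureTheory

/-- Density of the multivariate Gaussian `N(m, S)` on `ℝⁿ` with respect to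
Lebesgue measure. -/
noncomputable def gaussianPdf {n : ℕ} (m : Fin n → ℝ) (S : Matrix (Fin n) (Fin n) ℝ)
    (x : Fin n → ℝ) : ℝ :=
  (2 * Real.pi) ^ (-(n : ℝ) / 2) * S.det ^ (-(1 : ℝ) / 2) *
    Real.exp (-(1 / 2) * ((x - m) ⬝ᵥ (S⁻¹ *ᵥ (x - m))))

namespace Matrix

variable {ι : Type*} [Fintype ι]

theorem dotProduct_add_smul_vecMulVec_mulVec_of_dotProduct_eq_zero {α : Type*} [CommRing α]
    (A : Matrix ι ι α) (c : α) {u v : ι → α} (h : u ⬝ᵥ v = 0) :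
    v ⬝ᵥ ((A + c • vecMulVec u u) *ᵥ v) = v ⬝ᵥ (A *ᵥ v) := by
  simp [add_mulVec, smul_mulVec, vecMulVec_mulVec, h]

variable [DecidableEq ι]

theorem dotProduct_diagonal_mulVec_single_add_single (e : ι → ℝ) {i j : ι} (hij : i ≠ j)
    (a b : ℝ) :
    (Pi.single i a + Pi.single j b : ι → ℝ) ⬝ᵥ (diagonal e *ᵥ (Pi.single i a + Pi.single j b)) =
      e i * a ^ 2 + e j * b ^ 2 := by
  simp only [add_dotProduct, single_dotProduct, mulVec_diagonal, Pi.add_apply,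
    Pi.single_eq_same, Pi.single_eq_of_ne hij, Pi.single_eq_of_ne hij.symm, add_zero, zero_add]
  ring

theorem PosSemidef.mul_sq_add_mul_sq_nonneg {e u : ι → ℝ} {c : ℝ}
    (h : (diagonal e + c • vecMulVec u u).PosSemidef) {i j : ι} (hij : i ≠ j) :
    0 ≤ e i * u j ^ 2 + e j * u i ^ 2 := by
  set v : ι → ℝ := Pi.single i (u j) + Pi.single j (-u i)
  have hv : u ⬝ᵥ v = 0 := by
    simp only [v, dotProduct_add, dotProduct_single, mul_neg]
    ring
  have hquad := h.dotProduct_mulVec_nonneg v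
  rw [star_trivial, dotProduct_add_smul_vecMulVec_mulVec_of_dotProduct_eq_zero _ _ hv,
    dotProduct_diagonal_mulVec_single_add_single e hij] at hquad
  rwa [neg_sq] at hquad

theorem eq_of_posSemidef_diagonal_sandwich [Nontrivial ι] {d d' u : ι → ℝ} {c : ℝ}
    (hu : ∀ i, u i ≠ 0)
    (hlow : (diagonal d' - (diagonal d - c • vecMulVec u u)).PosSemidef)
    (hup : (diagonal d - diagonal d').PosSemidef) : d' = d := by
  rw [diagonal_sub, posSemidef_diagonal_iff] at hup
  rw [sub_sub_eq_add_sub, add_sub_right_comm, diagonal_sub] at hlow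
  funext i
  obtain ⟨j, hji⟩ := exists_ne i
  have hkey := hlow.mul_sq_add_mul_sq_nonneg hji.symm
  have hj : 0 < u j ^ 2 := pow_two_pos_of_ne_zero (hu j)
  nlinarith [hup i, hup j, sq_nonneg (u i)]

end Matrix

theorem ae_forall_ne_zero_of_absolutelyContinuous {ι : Type*} [Fintype ι]
    {μ : Measure (ι → ℝ)} (hμ : μ ≪ volume) : ∀ᵐ x ∂μ, ∀ j, x j ≠ 0 := by
  refine hμ.ae_le (ae_all_iff.2 fun j => ?_)
  rw [volume_pi]
  exact Measure.ae_eval_ne _ j 0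

theorem diagonal_sandwich_forces_eq_almost_surely_general
    (n : ℕ) (hn : 2 ≤ n) (d : Fin n → ℝ) (hd : ∀ i, 0 < d i)
    (R : ℝ)
    (xbar : Fin n → ℝ) (Sx : Matrix (Fin n) (Fin n) ℝ) :
    ∀ᵐ x ∂(volume.withDensity fun x => ENNReal.ofReal (gaussianPdf xbar Sx x)),
      ∀ d' : Fin n → ℝ,
        (Matrix.diagonal d' -
            (Matrix.diagonal d -
              (x ⬝ᵥ (Matrix.diagonal d *ᵥ x) + R)⁻¹ •
                (Matrix.diagonal d * vecMulVec x x * Matrix.diagonal d))).PosSemidef →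
        (Matrix.diagonal d - Matrix.diagonal d').PosSemidef →
        Matrix.diagonal d' = Matrix.diagonal d := by
  have : Nontrivial (Fin n) := Fin.nontrivial_iff_two_le.2 hn
  filter_upwards [ae_forall_ne_zero_of_absolutelyContinuous (withDensity_absolutelyContinuous _ _)]
    with x hx d' hlow hup
  have hsymm : x ᵥ* diagonal d = diagonal d *ᵥ x := by
    rw [← vecMul_transpose, diagonal_transpose]
  rw [mul_vecMulVec, vecMulVec_mul, hsymm] at hlow
  have hDx (i : Fin n) : (diagonal d *ᵥ x) i ≠ 0 := by
    rw [mulVec_diagonal]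
    exact mul_ne_zero (hd i).ne' (hx i)
  rw [eq_of_posSemidef_diagonal_sandwich hDx hlow hup]

/-- **Theorem 1.** For parameter estimation with a nondegenerate Gaussian input
vector `x ~ N(x̄, Sx)`, almost surely any diagonal matrix `D'` sandwiched between the
Kalman posterior covariance `D − (D x xᵀ D)/(xᵀ D x + R)` and the prior `D = diag d`
must equal `D`. -/
theorem diagonal_sandwich_forces_eq_almost_surely
    (n : ℕ) (hn : 2 ≤ n) (d : Fin n → ℝ) (hd : ∀ i, 0 < d i)
    (R : ℝ) (hR : 0 < R)
    (xbar : Fin n → ℝ) (Sx : Matrix (Fin n) (Fin n) ℝ) (hSx : Sx.PosDef) :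
    ∀ᵐ x ∂(volume.withDensity fun x => ENNReal.ofReal (gaussianPdf xbar Sx x)),
      ∀ d' : Fin n → ℝ,
        (Matrix.diagonal d' -
            (Matrix.diagonal d -
              (x ⬝ᵥ (Matrix.diagonal d *ᵥ x) + R)⁻¹ •
                (Matrix.diagonal d * vecMulVec x x * Matrix.diagonal d))).PosSemidef →
        (Matrix.diagonal d - Matrix.diagonal d').PosSemidef →
        Matrix.diagonal d' = Matrix.diagonal d :=
  diagonal_sandwich_forces_eq_almost_surely_general n hn d hd R xbar Sx
end

section
/- Let n ∈ ℕ, x ∈ ℝⁿ, R > 0, let d, d' ∈ ℝⁿ with d having nonnegative entries, and set D = diag(d), D' = diag(d'). Suppose D − (D x xᵀ D)/(xᵀ D x + R) ⪯ D' ⪯ D. If there exists a vector u ∈ ℝⁿ with every coordinate nonzero such that uᵀ D x = 0, then D' = D. (Deterministic core of Theorem 1.) -/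
/-! Testing the lower bound of the sandwich against `u` kills the rank-one Kalman correction,
since `uᵀ D x = 0`; hence `uᵀ (D - D') u ≤ 0`. As `D - D'` is a nonnegative diagonal matrix and
no coordinate of `u` vanishes, this forces `D' = D`. -/

open Matrix

section

variable {ι R : Type*} [Fintype ι]

theorem Matrix.dotProduct_mulVec_vecMulVec [CommSemiring R] (u v w : ι → R) :
    u ⬝ᵥ (vecMulVec v w *ᵥ u) = (u ⬝ᵥ v) * (w ⬝ᵥ u) := by
  rw [vecMulVec_mulVec, op_smul_eq_smul, dotProduct_smul, smul_eq_mul, mul_comm]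

theorem Matrix.dotProduct_mulVec_mul_vecMulVec_self_mul_transpose [CommSemiring R]
    (A : Matrix ι ι R) (x u : ι → R) :
    u ⬝ᵥ ((A * vecMulVec x x * Aᵀ) *ᵥ u) = (u ⬝ᵥ (A *ᵥ x)) ^ 2 := by
  rw [mul_vecMulVec, vecMulVec_mul, vecMul_transpose, dotProduct_mulVec_vecMulVec,
    dotProduct_comm (A *ᵥ x) u, sq]

theorem Matrix.eq_zero_of_dotProduct_diagonal_mulVec_nonpos [DecidableEq ι] [CommRing R]
    [LinearOrder R] [IsStrictOrderedRing R] {d u : ι → R} (hd : 0 ≤ d) (hu : ∀ i, u i ≠ 0)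
    (h : u ⬝ᵥ (diagonal d *ᵥ u) ≤ 0) : d = 0 := by
  have hterm : ∀ i, 0 ≤ u i * (d i * u i) := fun i => by
    rw [mul_left_comm]; exact mul_nonneg (hd i) (mul_self_nonneg _)
  have hsum : ∑ i, u i * (d i * u i) = 0 :=
    le_antisymm (by simpa [dotProduct, mulVec_diagonal] using h)
      (Finset.sum_nonneg fun i _ => hterm i)
  funext i
  have hi := (Finset.sum_eq_zero_iff_of_nonneg fun i _ => hterm i).1 hsum i (Finset.mem_univ i)
  simpa [hu i] using hi

end

theorem diagonal_sandwich_forces_eq_general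
    (n : ℕ) (x : Fin n → ℝ) (R : ℝ)
    (d d' : Fin n → ℝ)
    (h1 : (Matrix.diagonal d' -
            (Matrix.diagonal d -
              (x ⬝ᵥ (Matrix.diagonal d *ᵥ x) + R)⁻¹ •
                (Matrix.diagonal d * vecMulVec x x * Matrix.diagonal d))).PosSemidef)
    (h2 : (Matrix.diagonal d - Matrix.diagonal d').PosSemidef)
    (hu : ∃ u : Fin n → ℝ, (∀ i, u i ≠ 0) ∧ u ⬝ᵥ (Matrix.diagonal d *ᵥ x) = 0) :
    Matrix.diagonal d' = Matrix.diagonal d := by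
  obtain ⟨u, hu0, hux⟩ := hu
  have hcorr : u ⬝ᵥ ((diagonal d * vecMulVec x x * diagonal d) *ᵥ u) = 0 := by
    have h := dotProduct_mulVec_mul_vecMulVec_self_mul_transpose (diagonal d) x u
    rwa [diagonal_transpose, hux, sq, zero_mul] at h
  have hsub : diagonal d - diagonal d' = diagonal (d - d') := diagonal_sub d d'
  have hquad : u ⬝ᵥ (diagonal (d - d') *ᵥ u) ≤ 0 := by
    have h1u := h1.dotProduct_mulVec_nonneg u
    simp only [star_trivial, sub_mulVec, smul_mulVec, dotProduct_sub, dotProduct_smul, hcorr,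
      smul_zero] at h1u
    rw [← hsub, sub_mulVec, dotProduct_sub]
    linarith
  rw [hsub, posSemidef_diagonal_iff] at h2
  have hdd : d - d' = 0 :=
    eq_zero_of_dotProduct_diagonal_mulVec_nonpos (Pi.le_def.2 fun i => h2 i) hu0 hquad
  rw [sub_eq_zero.1 hdd]

/-- Deterministic core of Theorem 1: if `D' = diag d'` is sandwiched between the
Kalman posterior covariance `D − (D x xᵀ D)/(xᵀ D x + R)` and the prior `D = diag d`
(with `d` nonnegative), and there is a vector `u` with all nonzero coordinates
orthogonal to `D x`, then `D' = D`. -/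
theorem diagonal_sandwich_forces_eq
    (n : ℕ) (x : Fin n → ℝ) (R : ℝ) (hR : 0 < R)
    (d d' : Fin n → ℝ) (hd : ∀ i, 0 ≤ d i)
    (h1 : (Matrix.diagonal d' -
            (Matrix.diagonal d -
              (x ⬝ᵥ (Matrix.diagonal d *ᵥ x) + R)⁻¹ •
                (Matrix.diagonal d * vecMulVec x x * Matrix.diagonal d))).PosSemidef)
    (h2 : (Matrix.diagonal d - Matrix.diagonal d').PosSemidef)
    (hu : ∃ u : Fin n → ℝ, (∀ i, u i ≠ 0) ∧ u ⬝ᵥ (Matrix.diagonal d *ᵥ x) = 0) :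
    Matrix.diagonal d' = Matrix.diagonal d :=
  diagonal_sandwich_forces_eq_general n x R d d' h1 h2 hu
end

section
/- Let p = N(θ; μ, Σ_p) and q = N(θ; μ, Σ_q) be Gaussian densities on ℝⁿ with the same mean μ and symmetric positive definite covariances, and set M = Σ_q⁻¹ Σ_p. Then the squared-log-ratio integral (the L² information pseudometric squared) satisfies ∫ p(θ) |log(p(θ)/q(θ))|² dθ = n/2 − tr(M) + tr(M²)/2 + (1/4)( tr(M) − log det M − n )². -/
/-!
Centre at `μ` and substitute `θ - μ = P z`, where `P Pᵀ = Σ_p` and `Pᵀ Σ_q⁻¹ P = diag d` diagonalise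
both quadratic forms at once. Then `p` becomes the standard Gaussian density and
`log (p / q) = c - ½ ∑ aᵢ zᵢ²` with `aᵢ = 1 - dᵢ` and `c = -½ log det M`; the `dᵢ` are the
eigenvalues of `M`, so `∑ dᵢ = tr M` and `∑ dᵢ² = tr M²`. As the coordinates `zᵢ` are independent
with `E zᵢ² = 1` and `E zᵢ⁴ = 3`, `E (c - ½ ∑ aᵢ zᵢ²)² = (c - ½ ∑ aᵢ)² + ½ ∑ aᵢ²`.
-/

open Matrix MeasureTheory

open Real ProbabilityTheory

namespace Matrix

theorem integral_comp_mulVec {ι E : Type*} [Fintype ι] [DecidableEq ι]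
    [NormedAddCommGroup E] [NormedSpace ℝ E] {A : Matrix ι ι ℝ} (hA : A.det ≠ 0)
    (f : (ι → ℝ) → E) :
    ∫ x, f x = |A.det| • ∫ x, f (A *ᵥ x) := by
  let L : (ι → ℝ) →L[ℝ] (ι → ℝ) := LinearMap.toContinuousLinearMap (toLin' A)
  have hL : Function.Surjective L :=
    mulVec_surjective_iff_isUnit.mpr ((isUnit_iff_isUnit_det A).mpr hA.isUnit)
  have h := integral_image_eq_integral_abs_det_fderiv_smul volume MeasurableSet.univ
    (fun x _ => L.hasFDerivAt.hasFDerivWithinAt) (mulVec_injective_of_det_ne_zero hA).injOn f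
  rw [Set.image_univ_of_surjective hL, setIntegral_univ, setIntegral_univ] at h
  rw [h, integral_smul]
  simp [L, ContinuousLinearMap.det, LinearMap.det_toLin']

theorem mulVec_dotProduct_mulVec_mulVec {ι R : Type*} [Fintype ι] [CommSemiring R]
    (B P : Matrix ι ι R) (z : ι → R) :
    (P *ᵥ z) ⬝ᵥ (B *ᵥ (P *ᵥ z)) = z ⬝ᵥ ((Pᵀ * B * P) *ᵥ z) := by
  rw [mulVec_mulVec, dotProduct_mulVec, dotProduct_mulVec, mul_assoc]
  conv_rhs => rw [← vecMul_vecMul, vecMul_transpose]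

theorem transpose_mul_inv_mul_transpose_mul {ι : Type*} [Fintype ι] [DecidableEq ι]
    {P : Matrix ι ι ℝ} (hP : P.det ≠ 0) : Pᵀ * (P * Pᵀ)⁻¹ * P = 1 := by
  have hPt : IsUnit Pᵀ.det := by rw [det_transpose]; exact hP.isUnit
  rw [mul_inv_rev, ← mul_assoc, mul_nonsing_inv _ hPt, one_mul, nonsing_inv_mul _ hP.isUnit]

theorem trace_mul_pow_comm {ι R : Type*} [Fintype ι] [DecidableEq ι] [CommSemiring R]
    (A B : Matrix ι ι R) (k : ℕ) : ((A * B) ^ k).trace = ((B * A) ^ k).trace := by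
  cases k with
  | zero => simp
  | succ k =>
    rw [pow_succ, ← mul_assoc, mul_pow_mul, mul_assoc, trace_mul_comm, mul_assoc, ← pow_succ]

theorem trace_pow_mul_mul_transpose {ι R : Type*} [Fintype ι] [DecidableEq ι] [CommSemiring R]
    {B P : Matrix ι ι R} {d : ι → R} (h : Pᵀ * B * P = diagonal d) (k : ℕ) :
    ((B * (P * Pᵀ)) ^ k).trace = ∑ i, d i ^ k := by
  rw [← mul_assoc, trace_mul_pow_comm, ← mul_assoc, h, diagonal_pow, trace_diagonal]
  rfl

theorem dotProduct_sub_dotProduct_diagonal_mulVec {ι R : Type*} [Fintype ι] [DecidableEq ι]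
    [CommRing R] (d z : ι → R) : z ⬝ᵥ z - z ⬝ᵥ (diagonal d *ᵥ z) = ∑ i, (1 - d i) * z i ^ 2 := by
  simp only [dotProduct, mulVec_diagonal, ← Finset.sum_sub_distrib]
  exact Finset.sum_congr rfl fun i _ => by ring

theorem log_det_inv_mul {ι : Type*} [Fintype ι] [DecidableEq ι] {A B : Matrix ι ι ℝ}
    (hA : 0 < A.det) (hB : 0 < B.det) : log (A⁻¹ * B).det = log B.det - log A.det := by
  rw [det_mul, det_nonsing_inv, Ring.inverse_eq_inv', log_mul (inv_ne_zero hA.ne') hB.ne',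
    log_inv]
  ring

theorem PosSemidef.exists_mul_transpose_eq_and_diagonal {ι : Type*} [Fintype ι]
    [DecidableEq ι] {A B : Matrix ι ι ℝ} (hA : A.PosSemidef) (hB : B.IsHermitian) :
    ∃ (P : Matrix ι ι ℝ) (d : ι → ℝ), P * Pᵀ = A ∧ Pᵀ * B * P = diagonal d := by
  open scoped MatrixOrder in
  obtain ⟨R, rfl⟩ := CStarAlgebra.nonneg_iff_eq_star_mul_self.mp hA.nonneg
  have hC : (R * B * Rᵀ).IsHermitian := by
    simpa using isHermitian_mul_mul_conjTranspose R hB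
  set U : Matrix ι ι ℝ := (hC.eigenvectorUnitary : Matrix ι ι ℝ)
  have hstar : star U = Uᵀ := by rw [star_eq_conjTranspose, conjTranspose_eq_transpose_of_trivial]
  refine ⟨Rᵀ * U, hC.eigenvalues, ?_, ?_⟩
  · have hU : U * Uᵀ = 1 := hstar ▸ Unitary.coe_mul_star_self hC.eigenvectorUnitary
    rw [transpose_mul, transpose_transpose, mul_assoc, ← mul_assoc U, hU, one_mul]
    rfl
  · have h := hC.conjStarAlgAut_star_eigenvectorUnitary
    simp only [Unitary.conjStarAlgAut_apply, Unitary.coe_star, star_star,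
      RCLike.ofReal_real_eq_id, Function.id_comp] at h
    rw [transpose_mul, transpose_transpose, ← hstar, ← h]
    simp only [mul_assoc, U]

end Matrix

namespace ProbabilityTheory

theorem integrable_gaussianPDFReal_mul_pow (k : ℕ) :
    Integrable fun t => gaussianPDFReal 0 1 t * t ^ k := by
  have h := (integrable_rpow_mul_exp_neg_mul_sq (b := 1 / 2) (by norm_num)
    (s := k) (by linarith [k.cast_nonneg (α := ℝ)])).const_mul (√(2 * π))⁻¹
  refine h.congr (ae_of_all _ fun t => ?_)
  simp only [gaussianPDFReal, Real.rpow_natCast, NNReal.coe_one, mul_one, sub_zero]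
  rw [show -(1 / 2) * t ^ 2 = -t ^ 2 / 2 by ring]
  ring

theorem hasDerivAt_gaussianPDFReal_zero_one (t : ℝ) :
    HasDerivAt (gaussianPDFReal 0 1) (-t * gaussianPDFReal 0 1 t) t := by
  have h : HasDerivAt (fun x : ℝ => -x ^ 2 / 2) (-t) t :=
    (((hasDerivAt_pow 2 t).const_mul (-1 / 2 : ℝ)).congr_deriv (by ring)).congr_of_eventuallyEq
      (Filter.Eventually.of_forall fun x => by ring)
  simp only [gaussianPDFReal_def, NNReal.coe_one, mul_one, sub_zero]
  exact (h.exp.const_mul _).congr_deriv (by ring)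

theorem integral_gaussianPDFReal_mul_pow_add_two (k : ℕ) :
    ∫ t, gaussianPDFReal 0 1 t * t ^ (k + 2) =
      (k + 1) * ∫ t, gaussianPDFReal 0 1 t * t ^ k := by
  have hderiv (t : ℝ) : HasDerivAt (fun t => gaussianPDFReal 0 1 t * t ^ (k + 1))
      ((k + 1) * (gaussianPDFReal 0 1 t * t ^ k) - gaussianPDFReal 0 1 t * t ^ (k + 2)) t := by
    refine ((hasDerivAt_gaussianPDFReal_zero_one t).mul (hasDerivAt_pow (k + 1) t)).congr_deriv ?_
    push_cast; ring
  have h := integral_eq_zero_of_hasDerivAt_of_integrable hderiv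
    (((integrable_gaussianPDFReal_mul_pow k).const_mul _).sub
      (integrable_gaussianPDFReal_mul_pow (k + 2)))
    (integrable_gaussianPDFReal_mul_pow (k + 1))
  rw [integral_sub ((integrable_gaussianPDFReal_mul_pow k).const_mul _)
    (integrable_gaussianPDFReal_mul_pow (k + 2)), integral_const_mul, sub_eq_zero] at h
  exact h.symm

theorem integral_gaussianPDFReal_mul_sq : ∫ t, gaussianPDFReal 0 1 t * t ^ 2 = 1 := by
  simpa [integral_gaussianPDFReal_eq_one] using integral_gaussianPDFReal_mul_pow_add_two 0

theorem integral_gaussianPDFReal_mul_pow_four : ∫ t, gaussianPDFReal 0 1 t * t ^ 4 = 3 := by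
  rw [integral_gaussianPDFReal_mul_pow_add_two 2, integral_gaussianPDFReal_mul_sq]
  norm_num

end ProbabilityTheory

section gaussianPdf

variable {n : ℕ}

theorem gaussianPdf_zero_one (z : Fin n → ℝ) :
    gaussianPdf 0 1 z = ∏ i, gaussianPDFReal 0 1 (z i) := by
  simp only [gaussianPdf, gaussianPDFReal, det_one, one_rpow, mul_one, inv_one, one_mulVec,
    sub_zero, NNReal.coe_one, Finset.prod_mul_distrib, Finset.prod_const, Finset.card_univ,
    Fintype.card_fin, ← Real.exp_sum]
  congr 1
  · rw [sqrt_eq_rpow, ← rpow_neg (by positivity), ← rpow_natCast, ← rpow_mul (by positivity)]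
    congr 1
    ring
  · simp only [dotProduct, Finset.mul_sum]
    exact congrArg _ (Finset.sum_congr rfl fun i _ => by ring)

theorem gaussianPdf_zero_one_mul_prod (s : Finset (Fin n)) (f : Fin n → ℝ → ℝ)
    (z : Fin n → ℝ) :
    gaussianPdf 0 1 z * ∏ i ∈ s, f i (z i) =
      ∏ i, gaussianPDFReal 0 1 (z i) * if i ∈ s then f i (z i) else 1 := by
  rw [gaussianPdf_zero_one, Finset.prod_mul_distrib, Finset.prod_ite_mem, Finset.univ_inter]

theorem integrable_gaussianPdf_zero_one_mul_prod (s : Finset (Fin n)) {f : Fin n → ℝ → ℝ}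
    (hf : ∀ i ∈ s, Integrable fun t => gaussianPDFReal 0 1 t * f i t) :
    Integrable fun z => gaussianPdf 0 1 z * ∏ i ∈ s, f i (z i) := by
  simp_rw [gaussianPdf_zero_one_mul_prod]
  refine Integrable.fintype_prod (μ := fun _ => volume)
    (f := fun i t => gaussianPDFReal 0 1 t * if i ∈ s then f i t else 1) fun i => ?_
  split_ifs with hi
  · exact hf i hi
  · simpa using integrable_gaussianPDFReal 0 1

theorem integral_gaussianPdf_zero_one_mul_prod (s : Finset (Fin n)) (f : Fin n → ℝ → ℝ) :
    ∫ z, gaussianPdf 0 1 z * ∏ i ∈ s, f i (z i) =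
      ∏ i ∈ s, ∫ t, gaussianPDFReal 0 1 t * f i t := by
  simp_rw [gaussianPdf_zero_one_mul_prod]
  rw [integral_fintype_prod_volume_eq_prod
    (fun i t => gaussianPDFReal 0 1 t * if i ∈ s then f i t else 1)]
  calc ∏ i, ∫ t, gaussianPDFReal 0 1 t * (if i ∈ s then f i t else 1)
      = ∏ i, if i ∈ s then ∫ t, gaussianPDFReal 0 1 t * f i t else 1 :=
        Finset.prod_congr rfl fun i _ => by
          split_ifs <;> simp [integral_gaussianPDFReal_eq_one]
    _ = ∏ i ∈ s, ∫ t, gaussianPDFReal 0 1 t * f i t := by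
        rw [Finset.prod_ite_mem, Finset.univ_inter]

theorem integrable_gaussianPdf_zero_one : Integrable (gaussianPdf (n := n) 0 1) := by
  simpa using integrable_gaussianPdf_zero_one_mul_prod ∅ (f := fun _ _ => 1) (by simp)

theorem integral_gaussianPdf_zero_one : ∫ z, gaussianPdf (n := n) 0 1 z = 1 := by
  simpa using integral_gaussianPdf_zero_one_mul_prod ∅ (fun _ _ => 1)

theorem integrable_gaussianPdf_zero_one_mul_sq (i : Fin n) :
    Integrable fun z => gaussianPdf 0 1 z * z i ^ 2 := by
  simpa using integrable_gaussianPdf_zero_one_mul_prod {i} (f := fun _ t => t ^ 2)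
    (by simpa using integrable_gaussianPDFReal_mul_pow 2)

theorem integral_gaussianPdf_zero_one_mul_sq (i : Fin n) :
    ∫ z, gaussianPdf 0 1 z * z i ^ 2 = 1 := by
  have h := integral_gaussianPdf_zero_one_mul_prod {i} (fun _ t => t ^ 2)
  simp only [Finset.prod_singleton] at h
  rw [h, integral_gaussianPDFReal_mul_sq]

theorem integrable_gaussianPdf_zero_one_mul_sq_mul_sq (i j : Fin n) :
    Integrable fun z => gaussianPdf 0 1 z * (z i ^ 2 * z j ^ 2) := by
  rcases eq_or_ne i j with rfl | hij
  · simpa [← pow_add] using integrable_gaussianPdf_zero_one_mul_prod {i} (f := fun _ t => t ^ 4)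
      (by simpa using integrable_gaussianPDFReal_mul_pow 4)
  · simpa [Finset.prod_pair hij] using integrable_gaussianPdf_zero_one_mul_prod {i, j}
      (f := fun _ t => t ^ 2) (by simpa using integrable_gaussianPDFReal_mul_pow 2)

theorem integral_gaussianPdf_zero_one_mul_sq_mul_sq (i j : Fin n) :
    ∫ z, gaussianPdf 0 1 z * (z i ^ 2 * z j ^ 2) = if i = j then 3 else 1 := by
  rcases eq_or_ne i j with rfl | hij
  · have h := integral_gaussianPdf_zero_one_mul_prod {i} (fun _ t => t ^ 4)
    simp only [Finset.prod_singleton] at h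
    rw [if_pos rfl, ← integral_gaussianPDFReal_mul_pow_four, ← h]
    simp_rw [← pow_add]
  · have h := integral_gaussianPdf_zero_one_mul_prod {i, j} (fun _ t => t ^ 2)
    simp only [Finset.prod_pair hij] at h
    rw [if_neg hij, h, integral_gaussianPDFReal_mul_sq, one_mul]

theorem integrable_gaussianPdf_zero_one_mul_sum (a : Fin n → ℝ) :
    Integrable fun z => gaussianPdf 0 1 z * ∑ i, a i * z i ^ 2 := by
  simp_rw [Finset.mul_sum, mul_left_comm (gaussianPdf 0 1 _)]
  exact integrable_finsetSum _ fun i _ => (integrable_gaussianPdf_zero_one_mul_sq i).const_mul _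

theorem integral_gaussianPdf_zero_one_mul_sum (a : Fin n → ℝ) :
    ∫ z, gaussianPdf 0 1 z * ∑ i, a i * z i ^ 2 = ∑ i, a i := by
  simp_rw [Finset.mul_sum, mul_left_comm (gaussianPdf 0 1 _)]
  rw [integral_finsetSum _ fun i _ => (integrable_gaussianPdf_zero_one_mul_sq i).const_mul _]
  simp_rw [integral_const_mul, integral_gaussianPdf_zero_one_mul_sq, mul_one]

theorem mul_sum_mul_sq_sq (g : ℝ) (a z : Fin n → ℝ) :
    g * (∑ i, a i * z i ^ 2) ^ 2 = ∑ i, ∑ j, a i * a j * (g * (z i ^ 2 * z j ^ 2)) := by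
  simp_rw [sq (∑ i, _), Finset.sum_mul_sum, Finset.mul_sum]
  exact Finset.sum_congr rfl fun i _ => Finset.sum_congr rfl fun j _ => by ring

theorem integrable_gaussianPdf_zero_one_mul_sum_sq (a : Fin n → ℝ) :
    Integrable fun z => gaussianPdf 0 1 z * (∑ i, a i * z i ^ 2) ^ 2 := by
  simp_rw [mul_sum_mul_sq_sq]
  exact integrable_finsetSum _ fun i _ => integrable_finsetSum _ fun j _ =>
    (integrable_gaussianPdf_zero_one_mul_sq_mul_sq i j).const_mul _

theorem integral_gaussianPdf_zero_one_mul_sum_sq (a : Fin n → ℝ) :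
    ∫ z, gaussianPdf 0 1 z * (∑ i, a i * z i ^ 2) ^ 2 = (∑ i, a i) ^ 2 + 2 * ∑ i, a i ^ 2 := by
  simp_rw [mul_sum_mul_sq_sq]
  rw [integral_finsetSum _ fun i _ => integrable_finsetSum _ fun j _ =>
    (integrable_gaussianPdf_zero_one_mul_sq_mul_sq i j).const_mul _]
  simp_rw [integral_finsetSum _ fun j _ =>
      (integrable_gaussianPdf_zero_one_mul_sq_mul_sq _ j).const_mul _,
    integral_const_mul, integral_gaussianPdf_zero_one_mul_sq_mul_sq]
  have hterm (i j : Fin n) : a i * a j * (if i = j then (3 : ℝ) else 1) =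
      a i * a j + if i = j then 2 * a i ^ 2 else 0 := by
    split_ifs with h
    · subst h; ring
    · ring
  simp only [hterm, Finset.sum_add_distrib, Finset.sum_ite_eq, Finset.mem_univ, if_true,
    ← Finset.mul_sum]
  rw [sq, Finset.sum_mul]

theorem integral_gaussianPdf_zero_one_mul_sq_sub_half_sum (c : ℝ) (a : Fin n → ℝ) :
    ∫ z, gaussianPdf 0 1 z * (c - (∑ i, a i * z i ^ 2) / 2) ^ 2 =
      (c - (∑ i, a i) / 2) ^ 2 + (∑ i, a i ^ 2) / 2 := by
  have hexpand (z : Fin n → ℝ) : gaussianPdf 0 1 z * (c - (∑ i, a i * z i ^ 2) / 2) ^ 2 =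
      c ^ 2 * gaussianPdf 0 1 z - c * (gaussianPdf 0 1 z * ∑ i, a i * z i ^ 2) +
        gaussianPdf 0 1 z * (∑ i, a i * z i ^ 2) ^ 2 / 4 := by
    ring
  have hint : Integrable fun z => c ^ 2 * gaussianPdf 0 1 z -
      c * (gaussianPdf 0 1 z * ∑ i, a i * z i ^ 2) :=
    (integrable_gaussianPdf_zero_one.const_mul _).sub
      ((integrable_gaussianPdf_zero_one_mul_sum a).const_mul _)
  simp_rw [hexpand]
  rw [integral_add hint ((integrable_gaussianPdf_zero_one_mul_sum_sq a).div_const _),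
    integral_sub (integrable_gaussianPdf_zero_one.const_mul _)
      ((integrable_gaussianPdf_zero_one_mul_sum a).const_mul _),
    integral_div, integral_const_mul, integral_const_mul, integral_gaussianPdf_zero_one,
    integral_gaussianPdf_zero_one_mul_sum, integral_gaussianPdf_zero_one_mul_sum_sq]
  ring

theorem gaussianPdf_mulVec_add_mul_abs_det {P : Matrix (Fin n) (Fin n) ℝ} (hP : P.det ≠ 0)
    (μ z : Fin n → ℝ) : gaussianPdf μ (P * Pᵀ) (P *ᵥ z + μ) * |P.det| = gaussianPdf 0 1 z := by
  have hdet : (P * Pᵀ).det ^ (-(1 : ℝ) / 2) = |P.det|⁻¹ := by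
    rw [det_mul, det_transpose, ← sq, ← sq_abs, ← rpow_natCast, ← rpow_mul (abs_nonneg _)]
    norm_num [rpow_neg_one]
  simp only [gaussianPdf, add_sub_cancel_right, sub_zero, mulVec_dotProduct_mulVec_mulVec,
    transpose_mul_inv_mul_transpose_mul hP, hdet, det_one, one_rpow, inv_one, one_mulVec,
    mul_one]
  field_simp

theorem integral_gaussianPdf_mul_comp_sub {P : Matrix (Fin n) (Fin n) ℝ} (hP : P.det ≠ 0)
    (μ : Fin n → ℝ) (f : (Fin n → ℝ) → ℝ) :
    ∫ θ, gaussianPdf μ (P * Pᵀ) θ * f (θ - μ) = ∫ z, gaussianPdf 0 1 z * f (P *ᵥ z) := by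
  rw [← integral_add_right_eq_self _ μ, integral_comp_mulVec hP, smul_eq_mul,
    ← integral_const_mul]
  refine integral_congr_ae (ae_of_all _ fun z => ?_)
  simp only [add_sub_cancel_right, ← gaussianPdf_mulVec_add_mul_abs_det hP μ z]
  ring

theorem log_gaussianPdf_div_gaussianPdf {Sp Sq : Matrix (Fin n) (Fin n) ℝ} (hp : 0 < Sp.det)
    (hq : 0 < Sq.det) (μ θ : Fin n → ℝ) :
    log (gaussianPdf μ Sp θ / gaussianPdf μ Sq θ) =
      (log Sq.det - log Sp.det) / 2 -
        ((θ - μ) ⬝ᵥ (Sp⁻¹ *ᵥ (θ - μ)) - (θ - μ) ⬝ᵥ (Sq⁻¹ *ᵥ (θ - μ))) / 2 := by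
  have h2π : (0 : ℝ) < (2 * π) ^ (-(n : ℝ) / 2) := by positivity
  unfold gaussianPdf
  rw [log_div (by positivity) (by positivity), log_mul (by positivity) (exp_pos _).ne',
    log_mul (by positivity) (exp_pos _).ne', log_mul h2π.ne' (by positivity),
    log_mul h2π.ne' (by positivity), log_exp, log_exp, log_rpow hp, log_rpow hq]
  ring

end gaussianPdf

/-- Closed form of the squared `L²` information pseudometric between two common-mean
Gaussians `p = N(μ, Σ_p)` and `q = N(μ, Σ_q)`: with `M = Σ_q⁻¹ Σ_p`,
`∫ p |log(p/q)|² = n/2 − tr M + tr(M²)/2 + (1/4)(tr M − log det M − n)²`. -/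
theorem gaussian_L2_pseudometric_closed_form
    (n : ℕ) (μ : Fin n → ℝ) (Sp Sq : Matrix (Fin n) (Fin n) ℝ)
    (hSp : Sp.PosDef) (hSq : Sq.PosDef) :
    (∫ θ : Fin n → ℝ,
        gaussianPdf μ Sp θ * |Real.log (gaussianPdf μ Sp θ / gaussianPdf μ Sq θ)| ^ 2) =
      (n : ℝ) / 2 - (Sq⁻¹ * Sp).trace + ((Sq⁻¹ * Sp) ^ 2).trace / 2 +
        (1 / 4) * ((Sq⁻¹ * Sp).trace - Real.log (Sq⁻¹ * Sp).det - n) ^ 2 := by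
  obtain ⟨P, d, rfl, hPd⟩ :=
    hSp.posSemidef.exists_mul_transpose_eq_and_diagonal hSq.inv.isHermitian
  have hP : P.det ≠ 0 := fun h => by simpa [h] using hSp.det_pos
  set c := (log Sq.det - log (P * Pᵀ).det) / 2
  calc _ = ∫ θ, gaussianPdf μ (P * Pᵀ) θ * (c - ((θ - μ) ⬝ᵥ ((P * Pᵀ)⁻¹ *ᵥ (θ - μ)) -
          (θ - μ) ⬝ᵥ (Sq⁻¹ *ᵥ (θ - μ))) / 2) ^ 2 := by
        simp_rw [sq_abs, log_gaussianPdf_div_gaussianPdf hSp.det_pos hSq.det_pos]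
        rfl
    _ = ∫ z, gaussianPdf 0 1 z * (c - (∑ i, (1 - d i) * z i ^ 2) / 2) ^ 2 := by
        rw [integral_gaussianPdf_mul_comp_sub hP μ
          (fun x => (c - (x ⬝ᵥ ((P * Pᵀ)⁻¹ *ᵥ x) - x ⬝ᵥ (Sq⁻¹ *ᵥ x)) / 2) ^ 2)]
        simp_rw [mulVec_dotProduct_mulVec_mulVec, transpose_mul_inv_mul_transpose_mul hP, hPd,
          one_mulVec, dotProduct_sub_dotProduct_diagonal_mulVec]
    _ = (c - (∑ i, (1 - d i)) / 2) ^ 2 + (∑ i, (1 - d i) ^ 2) / 2 :=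
        integral_gaussianPdf_zero_one_mul_sq_sub_half_sum c _
    _ = _ := by
        have h1 := trace_pow_mul_mul_transpose hPd 1
        simp only [pow_one] at h1
        simp only [sub_sq, Finset.sum_add_distrib, Finset.sum_sub_distrib, ← Finset.mul_sum,
          Finset.sum_const, Finset.card_univ, Fintype.card_fin, nsmul_eq_mul, h1,
          trace_pow_mul_mul_transpose hPd 2, log_det_inv_mul hSq.det_pos hSp.det_pos]
        ring
end
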